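/- arXiv:2407.12412 — 2 statements merged into one kernel-verified Lean document; each statement's English description precedes it below -/
import Mathlib

section
/- Let K be an algebraically closed field, let m, n be positive integers, and let r be an integer with 1 ≤ r ≤ min(m, n). Set f = Σ_{i=0}^{r} x_i y_i in K[x_0, …, x_m, y_0, …, y_n]. If g ∈ K[x_0, …, x_m, y_0, …, y_n] vanishes at every point (x, y) ∈ K^{m+1} × K^{n+1} at which f vanishes, then f divides g. -/
/-!
Split off one summand: `f = x₀ y₀ + c`, where `c` involves neither `x₀` nor `y₀`, so `y₀ ∤ c`.
As a polynomial in `x₀` over the polynomial ring in the remaining variables, `f` is linear with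
coprime coefficients `y₀` and `c`, hence irreducible, hence prime since that ring is a UFD.
For the prime ideal `(f)` the Nullstellensatz says that every polynomial vanishing on the zero set
of `f` lies in `(f)`.
-/

open MvPolynomial

namespace MvPolynomial

theorem dvd_of_prime_of_forall_eval_eq_zero {σ K : Type*} [Field K] [IsAlgClosed K] [Finite σ]
    {f g : MvPolynomial σ K} (hf : Prime f) (hg : ∀ x, eval x f = 0 → eval x g = 0) : f ∣ g := by
  have := (Ideal.span_singleton_prime hf.ne_zero).mpr hf
  rw [← Ideal.mem_span_singleton, ← IsPrime.vanishingIdeal_zeroLocus (K := K) (Ideal.span {f})]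
  intro x hx
  exact hg x (mem_zeroLocus_iff.mp hx f (Ideal.subset_span rfl))

section PolynomialInOneVariable

variable {σ R : Type*} [CommRing R] [DecidableEq σ]

noncomputable def equivPolynomialNe (i : σ) :
    MvPolynomial σ R ≃ₐ[R] Polynomial (MvPolynomial {j // j ≠ i} R) :=
  (renameEquiv R (Equiv.optionSubtypeNe i).symm).trans (optionEquivLeft R _)

@[simp]
theorem equivPolynomialNe_X_self (i : σ) :
    equivPolynomialNe (R := R) i (X i) = Polynomial.X := by
  simp [equivPolynomialNe, optionEquivLeft_X_none]

@[simp]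
theorem equivPolynomialNe_rename_val (i : σ) (p : MvPolynomial {j // j ≠ i} R) :
    equivPolynomialNe i (rename Subtype.val p) = Polynomial.C p := by
  induction p using MvPolynomial.induction_on with
  | C a => simp [equivPolynomialNe, optionEquivLeft_C]
  | add p q hp hq => simp only [map_add, hp, hq]
  | mul_X p j hp =>
    simp only [map_mul, hp, rename_X]
    simp [equivPolynomialNe, Equiv.optionSubtypeNe_symm_of_ne j.2, optionEquivLeft_X_some]

variable [IsDomain R] [UniqueFactorizationMonoid R]

theorem prime_X_mul_rename_add_rename {i : σ} {a c : MvPolynomial {j // j ≠ i} R}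
    (ha : Prime a) (hac : ¬ a ∣ c) :
    Prime (X i * rename Subtype.val a + rename Subtype.val c) := by
  rw [← MulEquiv.prime_iff (equivPolynomialNe i).toMulEquiv]
  show Prime (equivPolynomialNe i (X i * rename Subtype.val a + rename Subtype.val c))
  rw [map_add, map_mul, equivPolynomialNe_X_self, equivPolynomialNe_rename_val,
    equivPolynomialNe_rename_val, mul_comm]
  exact (Polynomial.irreducible_C_mul_X_add_C ha.ne_zero
    (ha.irreducible.isRelPrime_iff_not_dvd.mpr hac)).prime

theorem prime_X_mul_X_add {i j : σ} (hji : j ≠ i) {c : MvPolynomial σ R} (hic : i ∉ c.vars)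
    (hjc : ¬ X j ∣ c) : Prime (X i * X j + c) := by
  have hc : (c.vars : Set σ) ⊆ Set.range ((↑) : {k // k ≠ i} → σ) := by
    intro k hk
    exact ⟨⟨k, by rintro rfl; exact hic hk⟩, rfl⟩
  obtain ⟨c, rfl⟩ := exists_rename_eq_of_vars_subset_range c _ Subtype.val_injective hc
  rw [← rename_X (R := R) ((↑) : {k // k ≠ i} → σ) ⟨j, hji⟩] at hjc ⊢
  exact prime_X_mul_rename_add_rename X_prime fun h => hjc (map_dvd _ h)

end PolynomialInOneVariable

end MvPolynomial

/-- Over an algebraically closed field, if `g` vanishes at every point of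
`K^{m+1} × K^{n+1}` where `f = ∑_{i=0}^{r} x_i y_i` vanishes (with
`1 ≤ r ≤ min m n`), then `f` divides `g`. -/
theorem stmt2 (K : Type*) [Field K] [IsAlgClosed K] (m n r : ℕ)
    (hr1 : 1 ≤ r) (hr : r ≤ min m n)
    (f g : MvPolynomial (Fin (m + 1) ⊕ Fin (n + 1)) K)
    (hf : f = ∑ i : Fin (r + 1),
      X (Sum.inl (Fin.castLE (by omega) i)) * X (Sum.inr (Fin.castLE (by omega) i)))
    (hg : ∀ (x : Fin (m + 1) → K) (y : Fin (n + 1) → K),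
      eval (Sum.elim x y) f = 0 → eval (Sum.elim x y) g = 0) :
    f ∣ g := by
  classical
  set c : MvPolynomial (Fin (m + 1) ⊕ Fin (n + 1)) K := ∑ i : Fin r,
    X (Sum.inl (Fin.castLE (by omega) i.succ)) * X (Sum.inr (Fin.castLE (by omega) i.succ))
  have hfc : f = X (Sum.inl 0) * X (Sum.inr 0) + c := by
    rw [hf, Fin.sum_univ_succ]
    rfl
  have hxc : Sum.inl 0 ∉ c.vars := by
    intro h
    obtain ⟨i, -, hi⟩ := Finset.mem_biUnion.mp (vars_sum_subset _ _ h)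
    rcases Finset.mem_union.mp (vars_mul _ _ hi) with h | h <;> simp [vars_X, Fin.ext_iff] at h
  have hyc : ¬ X (Sum.inr 0) ∣ c := by
    -- `y₀` vanishes at the point `x₁ = y₁ = 1` (other coordinates `0`), where `c = 1`
    have hm1 : 1 % (m + 1) = 1 := Nat.one_mod_eq_one.mpr (by omega)
    have hn1 : 1 % (n + 1) = 1 := Nat.one_mod_eq_one.mpr (by omega)
    intro hdvd
    have := map_dvd (eval (Sum.elim (Pi.single 1 1) (Pi.single 1 1))) hdvd
    rw [map_sum, Fintype.sum_eq_single ⟨0, hr1⟩] at this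
    · simp [Pi.single_apply, Fin.ext_iff, hm1, hn1] at this
    · intro i hi
      simp [Pi.single_apply, Fin.ext_iff, hm1, hn1] at hi ⊢
      omega
  have hfp : Prime f := hfc ▸ prime_X_mul_X_add Sum.inr_ne_inl hxc hyc
  exact dvd_of_prime_of_forall_eval_eq_zero hfp fun x hx => by
    simpa using hg (x ∘ Sum.inl) (x ∘ Sum.inr) (by simpa using hx)
end

section
/- Let m, n, d, e be positive integers. There is a polynomial P with rational coefficients and degree at most m+n−1 in one variable k such that for every positive integer k, P(k) = binom(m+dk, m)·binom(n+ek, n) − binom(m+dk−1, m)·binom(n+ek−1, n), the coefficient of k^{m+n−1} in P equals d^{m−1} e^{n−1} (m e + n d)/(m! n!), and the coefficient of k^{m+n−2} in P equals d^{m} e^{n} (m²(m−1)e² + m n (m+n) d e + n²(n−1)d²)/(2 · m! n! · d² e²). -/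
/-!
With `A_j(x) = (x+1)(x+2)⋯(x+j) = j!·C(x+j, j)` one has `A_j(x) - A_j(x-1) = j·A_{j-1}(x)`, hence
`m! n! P(k) = A_m(dk)A_n(ek) - A_m(dk-1)A_n(ek-1) = m·A_{m-1}(dk)A_n(ek) + n·A_m(dk-1)A_{n-1}(ek)`.
Both summands are constant multiples (`m d^{m-1} e^n` and `n d^m e^{n-1}`) of monic polynomials in `k`
of degree `m+n-1`, and the second coefficient of a monic product of linear factors `k + c` is the
sum of the `c`'s.
-/

open Polynomial Finset

section LinearProduct

variable {R : Type*} [CommRing R]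

-- In the notation above, `linearProd d 1 j` is `A_j(dX)` and `linearProd d 0 j` is `A_j(dX - 1)`.
noncomputable def linearProd (d c : R) (j : ℕ) : R[X] :=
  ∏ i ∈ range j, (C d * X + C (c + i))

theorem linearProd_succ_sub (d c : R) (j : ℕ) :
    linearProd d (c + 1) (j + 1) - linearProd d c (j + 1) =
      C ((j : R) + 1) * linearProd d (c + 1) j := by
  have hlow : linearProd d c (j + 1) = linearProd d (c + 1) j * (C d * X + C c) := by
    simp only [linearProd, prod_range_succ', Nat.cast_add, Nat.cast_one, Nat.cast_zero,
      add_zero, add_assoc, add_comm (1 : R)]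
  rw [hlow, linearProd, prod_range_succ, ← linearProd]
  simp only [map_add, map_one, map_natCast]
  ring

theorem linearProd_mul_sub (d e c c' : R) (i j : ℕ) :
    linearProd d (c + 1) (i + 1) * linearProd e (c' + 1) (j + 1) -
        linearProd d c (i + 1) * linearProd e c' (j + 1) =
      C ((i : R) + 1) * (linearProd d (c + 1) i * linearProd e (c' + 1) (j + 1)) +
        C ((j : R) + 1) * (linearProd d c (i + 1) * linearProd e (c' + 1) j) := by
  linear_combination linearProd e (c' + 1) (j + 1) * linearProd_succ_sub d c i +
    linearProd d c (i + 1) * linearProd_succ_sub e c' j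

theorem eval_linearProd_natCast (d c j k : ℕ) :
    (linearProd (d : R) c j).eval (k : R) =
      j.factorial * ((j + d * k + c - 1).choose j : R) := by
  rw [← Nat.cast_mul, show j + d * k + c = d * k + c + j by ring,
    ← Nat.ascFactorial_eq_factorial_mul_choose', Nat.ascFactorial_eq_prod_range, linearProd,
    eval_prod]
  push_cast
  simp [add_assoc]

theorem eval_linearProd_one_natCast (d j k : ℕ) :
    (linearProd (d : R) 1 j).eval (k : R) = j.factorial * ((j + d * k).choose j : R) := by
  simpa using eval_linearProd_natCast (R := R) d 1 j k

theorem eval_linearProd_zero_natCast (d j k : ℕ) :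
    (linearProd (d : R) 0 j).eval (k : R) = j.factorial * ((j + d * k - 1).choose j : R) := by
  simpa using eval_linearProd_natCast (R := R) d 0 j k

end LinearProduct

theorem Polynomial.Monic.coeffs_C_mul_add_C_mul {R : Type*} [Semiring R] {p q : R[X]} {D : ℕ}
    (hp : p.Monic) (hq : q.Monic) (hpD : p.natDegree = D + 1) (hqD : q.natDegree = D + 1)
    (a b : R) :
    (C a * p + C b * q).degree ≤ (D + 1 : ℕ) ∧ (C a * p + C b * q).coeff (D + 1) = a + b ∧
      (C a * p + C b * q).coeff D = a * p.nextCoeff + b * q.nextCoeff := by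
  have hnext : ∀ r : R[X], r.natDegree = D + 1 → r.nextCoeff = r.coeff D := fun r hr => by
    rw [nextCoeff_of_natDegree_pos (by omega), hr, Nat.add_sub_cancel]
  refine ⟨?_, ?_, ?_⟩
  · exact degree_le_of_natDegree_le <| natDegree_add_le_of_degree_le
      ((natDegree_C_mul_le a p).trans hpD.le) ((natDegree_C_mul_le b q).trans hqD.le)
  · rw [coeff_add, coeff_C_mul, coeff_C_mul, ← hpD, hp.coeff_natDegree, hpD, ← hqD,
      hq.coeff_natDegree, mul_one, mul_one]
  · rw [coeff_add, coeff_C_mul, coeff_C_mul, hnext p hpD, hnext q hqD]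

section Field

variable {K : Type*} [Field K] [CharZero K]

theorem sum_range_add_natCast (c : K) (j : ℕ) :
    ∑ i ∈ range j, (c + i) = j * c + j * (j - 1) / 2 := by
  induction j with
  | zero => simp
  | succ j ih => rw [sum_range_succ, ih]; push_cast; ring

theorem linearProd_eq_C_mul_monic {d : K} (hd : d ≠ 0) (c : K) (j : ℕ) :
    ∃ p : K[X], p.Monic ∧ p.natDegree = j ∧
      p.nextCoeff = (j * c + j * (j - 1) / 2) / d ∧ linearProd d c j = C (d ^ j) * p := by
  have hmonic : ∀ i ∈ range j, (X + C ((c + i) / d)).Monic := fun i _ => monic_X_add_C _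
  refine ⟨∏ i ∈ range j, (X + C ((c + i) / d)), monic_prod_of_monic _ _ hmonic, ?_, ?_, ?_⟩
  · simp [natDegree_prod_of_monic _ _ hmonic]
  · rw [Monic.nextCoeff_prod _ _ hmonic]
    simp only [nextCoeff_X_add_C, ← sum_div, sum_range_add_natCast]
  · have hfactor : ∀ i ∈ range j, C d * X + C (c + i) = C d * (X + C ((c + i) / d)) :=
      fun i _ => by rw [mul_add, ← C_mul, mul_div_cancel₀ _ hd]
    rw [linearProd, prod_congr rfl hfactor, prod_mul_distrib, prod_const, card_range, map_pow]

theorem linearProd_mul_linearProd_eq_C_mul_monic {d e : K} (hd : d ≠ 0) (he : e ≠ 0)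
    (c c' : K) (i j : ℕ) :
    ∃ p : K[X], p.Monic ∧ p.natDegree = i + j ∧
      p.nextCoeff = (i * c + i * (i - 1) / 2) / d + (j * c' + j * (j - 1) / 2) / e ∧
      linearProd d c i * linearProd e c' j = C (d ^ i * e ^ j) * p := by
  obtain ⟨p, hp, hpdeg, hpnext, hpeq⟩ := linearProd_eq_C_mul_monic hd c i
  obtain ⟨q, hq, hqdeg, hqnext, hqeq⟩ := linearProd_eq_C_mul_monic he c' j
  refine ⟨p * q, hp.mul hq, ?_, ?_, ?_⟩
  · rw [hp.natDegree_mul hq, hpdeg, hqdeg]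
  · rw [hp.nextCoeff_mul hq, hpnext, hqnext]
  · rw [hpeq, hqeq, map_mul]
    ring

theorem exists_monic_linearProd_mul_sub {d e : K} (hd : d ≠ 0) (he : e ≠ 0) (M N : ℕ) :
    ∃ p q : K[X], p.Monic ∧ q.Monic ∧ p.natDegree = M + N + 1 ∧ q.natDegree = M + N + 1 ∧
      p.nextCoeff = M * (M + 1) / (2 * d) + (N + 1) * (N + 2) / (2 * e) ∧
      q.nextCoeff = M * (M + 1) / (2 * d) + N * (N + 1) / (2 * e) ∧
      linearProd d 1 (M + 1) * linearProd e 1 (N + 1) -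
          linearProd d 0 (M + 1) * linearProd e 0 (N + 1) =
        C ((M + 1) * d ^ M * e ^ (N + 1)) * p + C ((N + 1) * d ^ (M + 1) * e ^ N) * q := by
  obtain ⟨p, hp, hpdeg, hpnext, hpeq⟩ :=
    linearProd_mul_linearProd_eq_C_mul_monic hd he 1 1 M (N + 1)
  obtain ⟨q, hq, hqdeg, hqnext, hqeq⟩ :=
    linearProd_mul_linearProd_eq_C_mul_monic hd he 0 1 (M + 1) N
  refine ⟨p, q, hp, hq, by omega, by omega, ?_, ?_, ?_⟩
  · rw [hpnext]; push_cast; field_simp; ring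
  · rw [hqnext]; push_cast; field_simp; ring
  · have hsplit := linearProd_mul_sub d e 0 0 M N
    rw [zero_add] at hsplit
    rw [hsplit, hpeq, hqeq, ← mul_assoc, ← mul_assoc, ← C_mul, ← C_mul, mul_assoc, mul_assoc]

end Field

/-- There is a rational polynomial `P` of degree at most `m+n-1` with
`P(k) = C(m+dk, m)·C(n+ek, n) − C(m+dk−1, m)·C(n+ek−1, n)` for all positive
integers `k`, whose coefficient of `k^{m+n-1}` is
`d^{m-1} e^{n-1} (me + nd)/(m! n!)` and whose coefficient of `k^{m+n-2}` is
`d^m e^n (m²(m-1)e² + mn(m+n)de + n²(n-1)d²)/(2 m! n! d² e²)`. -/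
theorem stmt4 (m n d e : ℕ) (hm : 0 < m) (hn : 0 < n) (hd : 0 < d) (he : 0 < e) :
    ∃ P : Polynomial ℚ,
      P.degree ≤ (m + n - 1 : ℕ) ∧
      (∀ k : ℕ, 0 < k →
        P.eval (k : ℚ) =
          ((m + d * k).choose m * (n + e * k).choose n : ℚ) -
            ((m + d * k - 1).choose m * (n + e * k - 1).choose n : ℚ)) ∧
      P.coeff (m + n - 1) =
        (d : ℚ) ^ (m - 1) * (e : ℚ) ^ (n - 1) * (m * e + n * d) /
          ((Nat.factorial m : ℚ) * (Nat.factorial n : ℚ)) ∧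
      P.coeff (m + n - 2) =
        (d : ℚ) ^ m * (e : ℚ) ^ n *
            ((m : ℚ) ^ 2 * (m - 1) * e ^ 2 + m * n * (m + n) * d * e +
              (n : ℚ) ^ 2 * (n - 1) * d ^ 2) /
          (2 * (Nat.factorial m : ℚ) * (Nat.factorial n : ℚ) * d ^ 2 * e ^ 2) := by
  obtain ⟨M, rfl⟩ : ∃ M, m = M + 1 := ⟨m - 1, by omega⟩
  obtain ⟨N, rfl⟩ : ∃ N, n = N + 1 := ⟨n - 1, by omega⟩
  have hd' : (d : ℚ) ≠ 0 := by positivity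
  have he' : (e : ℚ) ≠ 0 := by positivity
  obtain ⟨p, q, hp, hq, hpdeg, hqdeg, hpnext, hqnext, hdiff⟩ :=
    exists_monic_linearProd_mul_sub hd' he' M N
  set F : ℚ := (M + 1).factorial * (N + 1).factorial
  set α : ℚ := (M + 1) * d ^ M * e ^ (N + 1) / F
  set β : ℚ := (N + 1) * d ^ (M + 1) * e ^ N / F
  have hP : C α * p + C β * q =
      C F⁻¹ * (linearProd (d : ℚ) 1 (M + 1) * linearProd (e : ℚ) 1 (N + 1) -
        linearProd (d : ℚ) 0 (M + 1) * linearProd (e : ℚ) 0 (N + 1)) := by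
    rw [hdiff, mul_add, ← mul_assoc, ← mul_assoc, ← C_mul, ← C_mul]
    simp only [α, β, div_eq_inv_mul]
  obtain ⟨hdeg, hcoeff₁, hcoeff₂⟩ := hp.coeffs_C_mul_add_C_mul hq hpdeg hqdeg α β
  refine ⟨C α * p + C β * q, ?_, fun k _ => ?_, ?_, ?_⟩
  · rwa [show M + 1 + (N + 1) - 1 = M + N + 1 by omega]
  · rw [hP, eval_mul, eval_C, eval_sub, eval_mul, eval_mul, eval_linearProd_one_natCast,
      eval_linearProd_one_natCast, eval_linearProd_zero_natCast, eval_linearProd_zero_natCast]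
    simp only [F]
    field_simp
  · rw [show M + 1 + (N + 1) - 1 = M + N + 1 by omega, hcoeff₁]
    simp only [α, β, Nat.add_sub_cancel]
    push_cast
    ring
  · rw [show M + 1 + (N + 1) - 2 = M + N by omega, hcoeff₂, hpnext, hqnext]
    simp only [α, β, F]
    push_cast
    field_simp
    ring
end
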